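/- arXiv:1910.00826 — 6 statements merged into one kernel-verified Lean document; each statement's English description precedes it below -/
import Mathlib

section
/- A word w over a finite alphabet contains at most |w|+1 distinct palindromic factors (including the empty word). -/
def Rich {A : Type*} (w : List A) : Prop :=
  {p : List A | p.reverse = p ∧ p <:+: w}.ncard = w.length + 1

/-!
Appending a letter `a` to `u` creates at most one new palindromic factor. A new factor of
`u ++ [a]` must be a suffix, and of two palindromic suffixes the shorter is a suffix of the
longer, hence by symmetry also a prefix of it. If they differed, the shorter one would be a proper
prefix of a suffix of `u ++ [a]`, and thus would already occur in `u`.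
-/

namespace List

variable {α : Type*}

def palindromicFactors (w : List α) : Set (List α) :=
  {p | p.reverse = p ∧ p <:+: w}

theorem finite_palindromicFactors (w : List α) : w.palindromicFactors.Finite :=
  w.sublists.finite_toSet.subset fun _ hp => mem_sublists.2 hp.2.sublist

theorem palindromicFactors_nil : ([] : List α).palindromicFactors = {[]} := by
  ext p
  simp +contextual [palindromicFactors, infix_nil]

theorem IsPrefix.isInfix_of_isSuffix_concat {p q u : List α} {a : α} (hpq : p <+: q)
    (hne : p ≠ q) (hq : q <:+ u ++ [a]) : p <:+: u := by
  obtain rfl | ⟨q', hq', hq'u⟩ := suffix_concat_iff.1 hq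
  · exact absurd (prefix_nil.1 hpq) hne
  obtain rfl | hpq' := prefix_concat_iff.1 (hq' ▸ hpq)
  · exact absurd hq'.symm hne
  · exact hpq'.isInfix.trans hq'u.isInfix

theorem IsSuffix.isPrefix_of_reverse_eq {p q : List α} (h : p <:+ q) (hp : p.reverse = p)
    (hq : q.reverse = q) : p <+: q := by
  rwa [← reverse_suffix, hp, hq]

theorem subsingleton_palindromicFactors_concat_sdiff (u : List α) (a : α) :
    ((u ++ [a]).palindromicFactors \ u.palindromicFactors).Subsingleton := by
  have new_isSuffix : ∀ p ∈ (u ++ [a]).palindromicFactors \ u.palindromicFactors,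
      p <:+ u ++ [a] ∧ ¬p <:+: u := fun p ⟨⟨hp, hpw⟩, hpu⟩ =>
    have hpu : ¬p <:+: u := fun h => hpu ⟨hp, h⟩
    ⟨(infix_concat_iff.1 hpw).resolve_right hpu, hpu⟩
  intro p hp q hq
  wlog hpq : p.length ≤ q.length generalizing p q
  · exact (this hq hp (by omega)).symm
  obtain ⟨hpw, hpu⟩ := new_isSuffix p hp
  obtain ⟨hqw, -⟩ := new_isSuffix q hq
  by_contra hne
  have hpref : p <+: q :=
    (suffix_of_suffix_length_le hpw hqw hpq).isPrefix_of_reverse_eq hp.1.1 hq.1.1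
  exact hpu (hpref.isInfix_of_isSuffix_concat hne hqw)

theorem ncard_palindromicFactors_concat_le (u : List α) (a : α) :
    (u ++ [a]).palindromicFactors.ncard ≤ u.palindromicFactors.ncard + 1 := by
  have hsub := subsingleton_palindromicFactors_concat_sdiff u a
  have hnew := (Set.ncard_le_one_iff hsub.finite).2 fun hp hq => hsub hp hq
  have := Set.ncard_le_ncard_sdiff_add_ncard (u ++ [a]).palindromicFactors
    u.palindromicFactors u.finite_palindromicFactors
  omega

end List

theorem stmt0_general {A : Type*} (w : List A) :
    {p : List A | p.reverse = p ∧ p <:+: w}.ncard ≤ w.length + 1 := by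
  change w.palindromicFactors.ncard ≤ w.length + 1
  induction w using List.reverseRecOn with
  | nil => simp [List.palindromicFactors_nil]
  | append_singleton u a ih =>
    have := List.ncard_palindromicFactors_concat_le u a
    simp only [List.length_append, List.length_singleton]
    omega

theorem stmt0 {A : Type*} [Fintype A] (w : List A) :
    {p : List A | p.reverse = p ∧ p <:+: w}.ncard ≤ w.length + 1 :=
  stmt0_general w
end

section
/- A word w is rich if and only if every prefix p of w has a palindromic suffix occurring exactly once in p. -/
def occ {A : Type*} [DecidableEq A] (u v : List A) : ℕ :=
  ((List.range (u.length + 1)).filter (fun i => v.isPrefixOf (u.drop i))).length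

/-!
Appending a letter `a` to `u` creates at most one new palindromic factor, namely the longest
palindromic suffix of `u ++ [a]` when it does not occur in `u`: any shorter palindromic suffix is,
by symmetry, also a prefix of that longest one and hence already occurs in `u`. Thus `w` has at most
`|w| + 1` palindromic factors, with equality exactly when every nonempty prefix `p` of `w` gains one,
i.e. when some palindromic suffix of `p` does not occur in `p.dropLast`; that is precisely a
palindromic suffix occurring once in `p`.
-/

open List

theorem List.Nodup.length_eq_one_iff {α : Type*} {l : List α} {a : α} (hl : l.Nodup)
    (ha : a ∈ l) : l.length = 1 ↔ ∀ b ∈ l, b = a := by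
  constructor
  · intro h b hb
    obtain ⟨x, rfl⟩ := List.length_eq_one_iff.1 h
    simp_all
  · intro h
    have hrep : l = replicate l.length a := eq_replicate_iff.2 ⟨rfl, h⟩
    have := nodup_replicate.1 (hrep ▸ hl)
    have := length_pos_of_mem ha
    omega

section Palindromes

variable {A : Type*}

def palFactors (w : List A) : Set (List A) :=
  {p | p.reverse = p ∧ p <:+: w}

def newPalSuffixes (u : List A) (a : A) : Set (List A) :=
  {s | s.reverse = s ∧ s <:+ u ++ [a] ∧ ¬ s <:+: u}

theorem rich_iff_ncard_palFactors (w : List A) : Rich w ↔ (palFactors w).ncard = w.length + 1 :=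
  Iff.rfl

theorem palFactors_finite (w : List A) : (palFactors w).Finite :=
  (List.finite_toSet w.sublists).subset fun _ hp => mem_sublists.2 hp.2.sublist

theorem palFactors_nil : palFactors ([] : List A) = {[]} := by
  ext p
  simp only [palFactors, infix_nil, Set.mem_ofPred_eq, Set.mem_singleton_iff, and_iff_right_iff_imp]
  rintro rfl
  rfl

theorem infix_dropLast_of_ne_nil {r s t : List A} (ht : t ≠ []) : s <:+: (r ++ s ++ t).dropLast := by
  rw [dropLast_append_of_ne_nil ht]
  exact ⟨r, t.dropLast, rfl⟩

theorem infix_dropLast_of_palindrome_suffix {s s' w : List A} (hs : s.reverse = s)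
    (hs' : s'.reverse = s') (h : s <:+ w) (h' : s' <:+ w) (hlt : s.length < s'.length) :
    s <:+: w.dropLast := by
  obtain ⟨t, rfl⟩ : s <+: s' := by
    simpa only [hs, hs'] using reverse_prefix.2 (suffix_of_suffix_length_le h h' hlt.le)
  obtain ⟨r, rfl⟩ := h'
  have ht : t ≠ [] := by
    rintro rfl
    simp at hlt
  simpa only [append_assoc] using infix_dropLast_of_ne_nil (r := r) ht

theorem infix_dropLast_iff {s p : List A} (hp : p ≠ []) :
    s <:+: p.dropLast ↔ ∃ i, i + s.length < p.length ∧ s <+: p.drop i := by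
  constructor
  · rintro ⟨r, t, h⟩
    have hp' : r ++ s ++ (t ++ [p.getLast hp]) = p := by
      rw [← append_assoc, h, dropLast_append_getLast]
    refine ⟨r.length, ?_, ?_⟩
    · have := congrArg length hp'
      simp only [length_append, length_singleton] at this
      omega
    · rw [← hp', append_assoc, drop_left]
      exact prefix_append _ _
  · rintro ⟨i, hi, t, ht⟩
    have ht0 : t ≠ [] := by
      rintro rfl
      have := congrArg length ht
      simp only [append_nil, length_drop] at this
      omega
    have hp' : take i p ++ s ++ t = p := by
      rw [append_assoc, ht, take_append_drop]
    rw [← hp']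
    exact infix_dropLast_of_ne_nil ht0

theorem newPalSuffixes_subsingleton (u : List A) (a : A) : (newPalSuffixes u a).Subsingleton := by
  rintro s ⟨hs, hsuf, hnew⟩ s' ⟨hs', hsuf', hnew'⟩
  rcases lt_trichotomy s.length s'.length with hlt | heq | hgt
  · simpa using hnew (by simpa using infix_dropLast_of_palindrome_suffix hs hs' hsuf hsuf' hlt)
  · exact (suffix_of_suffix_length_le hsuf hsuf' heq.le).eq_of_length heq
  · simpa using hnew' (by simpa using infix_dropLast_of_palindrome_suffix hs' hs hsuf' hsuf hgt)

theorem palFactors_concat (u : List A) (a : A) :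
    palFactors (u ++ [a]) = palFactors u ∪ newPalSuffixes u a := by
  ext s
  simp only [palFactors, newPalSuffixes, Set.mem_union, Set.mem_ofPred_eq, infix_concat_iff]
  tauto

theorem ncard_palFactors_concat (u : List A) (a : A) :
    (palFactors (u ++ [a])).ncard = (palFactors u).ncard + (newPalSuffixes u a).ncard := by
  rw [palFactors_concat]
  exact Set.ncard_union_eq (Set.disjoint_left.2 fun _ hs hs' => hs'.2.2 hs.2)
    (palFactors_finite u) (newPalSuffixes_subsingleton u a).finite

theorem ncard_newPalSuffixes_le_one (u : List A) (a : A) : (newPalSuffixes u a).ncard ≤ 1 := by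
  rcases (newPalSuffixes_subsingleton u a).eq_empty_or_singleton with h | ⟨s, h⟩ <;> simp [h]

theorem ncard_palFactors_le (w : List A) : (palFactors w).ncard ≤ w.length + 1 := by
  induction w using reverseRecOn with
  | nil => simp [palFactors_nil]
  | append_singleton u a ih =>
    have := ncard_newPalSuffixes_le_one u a
    rw [ncard_palFactors_concat, length_append, length_singleton]
    omega

theorem rich_nil : Rich ([] : List A) := by
  simp [rich_iff_ncard_palFactors, palFactors_nil]

theorem rich_concat_iff (u : List A) (a : A) :
    Rich (u ++ [a]) ↔ Rich u ∧ (newPalSuffixes u a).Nonempty := by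
  have := ncard_palFactors_le u
  rw [rich_iff_ncard_palFactors, rich_iff_ncard_palFactors, ncard_palFactors_concat,
    length_append, length_singleton]
  rcases (newPalSuffixes_subsingleton u a).eq_empty_or_singleton with h | ⟨s, h⟩
  · simp only [h, Set.ncard_empty, Set.not_nonempty_empty, and_false, iff_false]
    omega
  · simp [h]

end Palindromes

section Occurrences

variable {A : Type*} [DecidableEq A]

theorem occ_eq_one_iff {s p : List A} (hp : p ≠ []) (hs : s <:+ p) :
    occ p s = 1 ↔ ¬ s <:+: p.dropLast := by
  have last_occ : s <+: p.drop (p.length - s.length) := by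
    obtain ⟨r, rfl⟩ := hs
    simp
  rw [occ, (nodup_range.filter _).length_eq_one_iff (a := p.length - s.length)
    (by simpa [isPrefixOf_iff_prefix] using last_occ), infix_dropLast_iff hp]
  simp only [mem_filter, mem_range, isPrefixOf_iff_prefix, and_imp, not_exists, not_and]
  constructor
  · intro h i hi hpre
    have := h i (by omega) hpre
    omega
  · intro h i _ hpre
    have := hpre.length_le
    rw [length_drop] at this
    by_contra
    exact h i (by omega) hpre

theorem newPalSuffixes_nonempty_iff (u : List A) (a : A) :
    (newPalSuffixes u a).Nonempty ↔
      ∃ s, s <:+ u ++ [a] ∧ s.reverse = s ∧ occ (u ++ [a]) s = 1 := by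
  refine exists_congr fun s => ?_
  simp only [newPalSuffixes, Set.mem_ofPred_eq]
  constructor
  · rintro ⟨hpal, hs, hnew⟩
    exact ⟨hs, hpal, (occ_eq_one_iff (by simp) hs).2 (by rwa [dropLast_concat])⟩
  · rintro ⟨hs, hpal, hocc⟩
    exact ⟨hpal, hs, by simpa using (occ_eq_one_iff (by simp) hs).1 hocc⟩

end Occurrences

theorem stmt1 {A : Type*} [DecidableEq A] (w : List A) :
    Rich w ↔ ∀ p : List A, p <+: w →
      ∃ s : List A, s <:+ p ∧ s.reverse = s ∧ occ p s = 1 := by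
  induction w using reverseRecOn with
  | nil =>
    simp only [rich_nil, true_iff, prefix_nil, forall_eq]
    exact ⟨[], suffix_refl _, rfl, rfl⟩
  | append_singleton u a ih =>
    rw [rich_concat_iff, ih, newPalSuffixes_nonempty_iff]
    simp only [prefix_concat_iff, or_imp, forall_and, forall_eq]
    exact and_comm
end

section
/- If w is rich and p is a factor of w, then both p and the reversal of p are rich. -/
/-!
Appending a letter creates at most one new palindromic factor: a new one must be a palindromic
suffix, and of two palindromic suffixes the shorter is a proper prefix of the longer (both being
palindromes), so it already occurs before the last letter. Hence a word has at most `|w| + 1`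
palindromic factors, and since the count rises by at most one per letter, every prefix of a rich
word is rich. Reversal preserves the set of palindromic factors, which passes richness to
suffixes and so to all factors.
-/

namespace List

variable {A : Type*}

def palFactors (w : List A) : Set (List A) := {p | p.reverse = p ∧ p <:+: w}

theorem palFactors_finite (w : List A) : w.palFactors.Finite :=
  w.sublists.finite_toSet.subset fun _ hp => mem_sublists.2 hp.2.sublist

theorem palFactors_reverse (w : List A) : w.reverse.palFactors = w.palFactors := by
  ext p
  refine and_congr_right fun hpal => ?_
  conv_lhs => rw [← hpal]
  exact reverse_infix

theorem isSuffix_of_mem_palFactors_concat_sdiff {w u : List A} {a : A}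
    (hu : u ∈ (w ++ [a]).palFactors \ w.palFactors) : u <:+ w ++ [a] :=
  (infix_concat_iff.1 hu.1.2).resolve_right fun h => hu.2 ⟨hu.1.1, h⟩

theorem palFactors_concat_sdiff_subsingleton (w : List A) (a : A) :
    ((w ++ [a]).palFactors \ w.palFactors).Subsingleton := by
  suffices key : ∀ u ∈ (w ++ [a]).palFactors \ w.palFactors,
      ∀ v ∈ (w ++ [a]).palFactors \ w.palFactors, u.length ≤ v.length → u = v by
    intro u hu v hv
    rcases Nat.le_total u.length v.length with h | h
    exacts [key u hu v hv h, (key v hv u hu h).symm]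
  intro u hu v hv hlen
  have huv : u <+: v := by
    have := reverse_prefix.2 <| suffix_of_suffix_length_le
      (isSuffix_of_mem_palFactors_concat_sdiff hu) (isSuffix_of_mem_palFactors_concat_sdiff hv) hlen
    rwa [hu.1.1, hv.1.1] at this
  by_contra hne
  have hv_ne : v ≠ [] := by
    rintro rfl
    exact hne (prefix_nil.1 huv)
  obtain ⟨t, rfl, htw⟩ :=
    (suffix_concat_iff.1 (isSuffix_of_mem_palFactors_concat_sdiff hv)).resolve_left hv_ne
  have hut : u <+: t := (prefix_concat_iff.1 huv).resolve_left hne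
  exact hu.2 ⟨hu.1.1, hut.isInfix.trans htw.isInfix⟩

theorem ncard_palFactors_concat_le (w : List A) (a : A) :
    (w ++ [a]).palFactors.ncard ≤ w.palFactors.ncard + 1 :=
  calc (w ++ [a]).palFactors.ncard
      ≤ ((w ++ [a]).palFactors \ w.palFactors).ncard + w.palFactors.ncard :=
        Set.ncard_le_ncard_sdiff_add_ncard _ _ w.palFactors_finite
    _ ≤ 1 + w.palFactors.ncard := by
        gcongr
        exact (Set.ncard_le_one ((palFactors_finite _).sdiff)).2
          (palFactors_concat_sdiff_subsingleton w a)
    _ = w.palFactors.ncard + 1 := Nat.add_comm _ _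

theorem ncard_palFactors_le (w : List A) : w.palFactors.ncard ≤ w.length + 1 := by
  induction w using reverseRecOn with
  | nil =>
    have : ([] : List A).palFactors = {[]} := by
      ext p
      simp only [palFactors, infix_nil, Set.mem_ofPred_eq, Set.mem_singleton_iff]
      exact and_iff_right_of_imp fun hp => hp ▸ rfl
    simp [this]
  | append_singleton w a ih =>
    have := ncard_palFactors_concat_le w a
    simp only [length_append, length_singleton]
    omega

end List

namespace Rich

variable {A : Type*} {w u : List A}

theorem iff_ncard_palFactors : Rich w ↔ w.palFactors.ncard = w.length + 1 := Iff.rfl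

theorem of_concat {a : A} (h : Rich (w ++ [a])) : Rich w := by
  have hle := w.ncard_palFactors_concat_le a
  have hge := w.ncard_palFactors_le
  rw [iff_ncard_palFactors, List.length_append, List.length_singleton] at h
  rw [iff_ncard_palFactors]
  omega

theorem of_prefix (hw : Rich w) (hu : u <+: w) : Rich u := by
  induction w using List.reverseRecOn with
  | nil => rwa [List.prefix_nil.1 hu]
  | append_singleton w a ih =>
    rcases List.prefix_concat_iff.1 hu with rfl | h
    exacts [hw, ih hw.of_concat h]

protected theorem reverse (hw : Rich w) : Rich w.reverse := by
  rwa [iff_ncard_palFactors, List.palFactors_reverse, List.length_reverse]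

theorem of_suffix (hw : Rich w) (hu : u <:+ w) : Rich u := by
  simpa using (hw.reverse.of_prefix (List.reverse_prefix.2 hu)).reverse

theorem of_infix (hw : Rich w) (hu : u <:+: w) : Rich u := by
  obtain ⟨t, hut, htw⟩ := List.infix_iff_prefix_suffix.1 hu
  exact (hw.of_suffix htw).of_prefix hut

end Rich

theorem stmt2 {A : Type*} (w p : List A) (hw : Rich w) (hp : p <:+: w) :
    Rich p ∧ Rich p.reverse :=
  ⟨hw.of_infix hp, (hw.of_infix hp).reverse⟩
end

section
/- Let w, wx be rich words with x a letter, and suppose ytx is a suffix of wx where y ≠ x are letters, t is a palindrome, and ytx is reverse-unioccurrent in wx (the total number of occurrences of ytx and its reversal in wx is 1). Then wx is not the right standard extension of w. -/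
/-- `p` is the longest proper palindromic suffix of `w`. -/
def IsLPPS {A : Type*} (w p : List A) : Prop :=
  p.reverse = p ∧ p <:+ w ∧ p ≠ w ∧
    ∀ q : List A, q.reverse = q → q <:+ w → q ≠ w → q.length ≤ p.length
/-- `v` is the right standard extension of `w`. -/
def IsRSE {A : Type*} (w v : List A) : Prop :=
  ∃ (x : A) (p : List A), IsLPPS w p ∧ (x :: p) <:+ w ∧ v = w ++ [x]

theorem occ_pos_of_infix {A : Type*} [DecidableEq A] {u v : List A} (h : v <:+: u) :
    0 < occ u v := by
  obtain ⟨s, r, rfl⟩ := h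
  apply List.length_pos_of_mem (a := s.length)
  rw [List.mem_filter, List.mem_range, List.isPrefixOf_iff_prefix, List.append_assoc,
    List.drop_left]
  exact ⟨by simp, List.prefix_append v r⟩

theorem IsLPPS.cons_suffix_of_cons_suffix {A : Type*} {w p t : List A} {x y : A}
    (hp : IsLPPS w p) (hxp : x :: p <:+ w) (ht : t.reverse = t) (hyt : y :: t <:+ w)
    (hxy : y ≠ x) : y :: t <:+ p := by
  obtain ⟨-, hpw, -, hmax⟩ := hp
  have htw : t <:+ w := (List.suffix_cons y t).trans hyt
  have htw_ne : t ≠ w := by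
    rintro rfl
    simpa using hyt.length_le
  have hle : t.length ≤ p.length := hmax t ht htw htw_ne
  have hne : t.length ≠ p.length := fun hlen => by
    have hcons := (List.suffix_of_suffix_length_le hyt hxp (by simp [hlen])).eq_of_length
      (by simp [hlen])
    exact hxy (List.cons.inj hcons).1
  exact List.suffix_of_suffix_length_le hyt hpw (lt_of_le_of_ne hle hne)

theorem concat_prefix_of_cons_suffix_of_palindrome {A : Type*} {p t : List A} {y : A}
    (hp : p.reverse = p) (ht : t.reverse = t) (h : y :: t <:+ p) : t ++ [y] <+: p := by
  simpa [ht, hp] using List.reverse_prefix.mpr h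

theorem stmt13_general {A : Type*} [DecidableEq A] (w t : List A) (x y : A)
    (hxy : y ≠ x)
    (hpal : t.reverse = t)
    (hsuf : (y :: (t ++ [x])) <:+ (w ++ [x]))
    (hocc : occ (w ++ [x]) (y :: (t ++ [x]))
          + occ (w ++ [x]) (y :: (t ++ [x])).reverse = 1) :
    ¬ IsRSE w (w ++ [x]) := by
  rintro ⟨z, p, hp, hzp, hext⟩
  have hzx : z = x := by simpa using (List.append_cancel_left hext).symm
  subst z
  have hyt : y :: t <:+ w := List.suffix_append_self_iff.mp (by simpa using hsuf)
  have hty : t ++ [y] <+: p := concat_prefix_of_cons_suffix_of_palindrome hp.1 hpal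
    (hp.cons_suffix_of_cons_suffix hzp hpal hyt hxy)
  have hrev : (y :: (t ++ [x])).reverse <:+: w ++ [x] := by
    have hxty : x :: (t ++ [y]) <:+: w := (List.cons_prefix_cons.mpr ⟨rfl, hty⟩).isInfix.trans
      hzp.isInfix
    simpa [hpal] using hxty.trans (List.prefix_append w [x]).isInfix
  have hocc_suf := occ_pos_of_infix hsuf.isInfix
  have hocc_rev := occ_pos_of_infix hrev
  omega

theorem stmt13 {A : Type*} [DecidableEq A] (w t : List A) (x y : A)
    (hw : Rich w) (hwx : Rich (w ++ [x])) (hxy : y ≠ x)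
    (hpal : t.reverse = t)
    (hsuf : (y :: (t ++ [x])) <:+ (w ++ [x]))
    (hocc : occ (w ++ [x]) (y :: (t ++ [x]))
          + occ (w ++ [x]) (y :: (t ++ [x])).reverse = 1) :
    ¬ IsRSE w (w ++ [x]) :=
  stmt13_general w t x y hxy hpal hsuf hocc
end

section
/- If w is rich and t = x·p·y is a switch occurring as a factor of w (x ≠ y letters, p a palindrome), then there is a prefix v of w such that v is a flexed point of w (i.e., v is not the right standard extension of v with its last letter removed) and either t or its reversal is a suffix of v. -/
/-- `v` is a flexed point of `w`. -/
def FlexedPoint {A : Type*} (w v : List A) : Prop :=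
  v <+: w ∧ ∃ (p : List A) (x : A), v = p ++ [x] ∧ ¬ IsRSE p v

/-!
Take a shortest prefix `v` of `w` ending with the switch `x·p·y` or with its reversal `y·p·x`,
say with `x·p·y`, and write `v = u·y`. If `v` were the right standard extension of `u`, then
`y·s` would be a suffix of `u`, where `s` is the longest proper palindromic suffix of `u`.
Since `p` is a proper palindromic suffix of `u` and `x ≠ y`, the palindrome `s` is strictly
longer than `p`, so it ends with `x·p` and hence, being a palindrome, starts with `p·x`.
Then `y·s`, and with it `u`, contains `y·p·x` ending strictly before `v` ends, contradicting
minimality.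
-/

section

open List

variable {A : Type*}

theorem IsLPPS.exists_prefix_suffix_switch {u p s : List A} {x y : A} (hxy : x ≠ y)
    (hpal : p.reverse = p) (hxp : x :: p <:+ u) (hs : IsLPPS u s) (hys : y :: s <:+ u) :
    ∃ m, m <+: u ∧ y :: (p ++ [x]) <:+ m := by
  obtain ⟨hs_pal, hs_suf, -, hs_max⟩ := hs
  have hp_lt : p.length < u.length := by simpa using hxp.length_le
  have hps : p.length ≤ s.length :=
    hs_max p hpal ((suffix_cons x p).trans hxp) (by rintro rfl; omega)
  have hps' : p.length < s.length := by
    refine lt_of_le_of_ne hps fun heq => hxy ?_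
    have := (suffix_of_suffix_length_le hxp hys (by simp [heq])).eq_of_length (by simp [heq])
    exact (cons.inj this).1
  have hpx : p ++ [x] <+: s := by
    simpa [hpal, hs_pal] using reverse_prefix.2 (suffix_of_suffix_length_le hxp hs_suf
      (by simpa using hps'))
  obtain ⟨r, rfl⟩ := hpx
  obtain ⟨u', rfl⟩ := hys
  exact ⟨u' ++ y :: (p ++ [x]), ⟨r, by simp⟩, suffix_append _ _⟩

theorem IsRSE.exists_prefix_suffix_switch {u v p : List A} {x y : A} (hxy : x ≠ y)
    (hpal : p.reverse = p) (h : IsRSE u v) (hv : x :: (p ++ [y]) <:+ v) :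
    ∃ m, m <+: u ∧ y :: (p ++ [x]) <:+ m := by
  obtain ⟨a, s, hs, has, rfl⟩ := h
  rw [← cons_append, suffix_append_inj_of_length_eq (s₁ := [y]) (s₂ := [a]) rfl,
    singleton_inj] at hv
  obtain ⟨hxp, rfl⟩ := hv
  exact IsLPPS.exists_prefix_suffix_switch hxy hpal hxp hs has

theorem exists_flexedPoint_of_prefix {w p : List A} {x y : A} (hxy : x ≠ y)
    (hpal : p.reverse = p) (v : List A) (hvw : v <+: w)
    (hv : x :: (p ++ [y]) <:+ v ∨ y :: (p ++ [x]) <:+ v) :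
    ∃ v', FlexedPoint w v' ∧ (x :: (p ++ [y]) <:+ v' ∨ y :: (p ++ [x]) <:+ v') := by
  obtain rfl | ⟨u, c, rfl⟩ := v.eq_nil_or_concat
  · simp at hv
  rw [concat_eq_append] at hvw hv
  by_cases hrse : IsRSE u (u ++ [c])
  · have hu : u <+: w := (prefix_append u [c]).trans hvw
    obtain ⟨m, hmu, hm⟩ | ⟨m, hmu, hm⟩ := hv.imp
      (IsRSE.exists_prefix_suffix_switch hxy hpal hrse)
      (IsRSE.exists_prefix_suffix_switch hxy.symm hpal hrse)
    · exact exists_flexedPoint_of_prefix hxy hpal m (hmu.trans hu) (Or.inr hm)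
    · exact exists_flexedPoint_of_prefix hxy hpal m (hmu.trans hu) (Or.inl hm)
  · exact ⟨u ++ [c], ⟨hvw, u, c, rfl, hrse⟩, hv⟩
termination_by v.length
decreasing_by all_goals subst_vars; simpa using Nat.lt_succ_of_le hmu.length_le

end

theorem stmt14_general {A : Type*} (w p : List A) (x y : A)
    (hxy : x ≠ y) (hpal : p.reverse = p)
    (hfac : (x :: (p ++ [y])) <:+: w) :
    ∃ v : List A, FlexedPoint w v ∧
      ((x :: (p ++ [y])) <:+ v ∨ (x :: (p ++ [y])).reverse <:+ v) := by
  have hrev : (x :: (p ++ [y])).reverse = y :: (p ++ [x]) := by simp [hpal]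
  obtain ⟨l, r, rfl⟩ := hfac
  rw [hrev]
  exact exists_flexedPoint_of_prefix hxy hpal (l ++ x :: (p ++ [y])) ⟨r, rfl⟩
    (Or.inl (List.suffix_append _ _))

theorem stmt14 {A : Type*} (w p : List A) (x y : A)
    (hw : Rich w) (hxy : x ≠ y) (hpal : p.reverse = p)
    (hfac : (x :: (p ++ [y])) <:+: w) :
    ∃ v : List A, FlexedPoint w v ∧
      ((x :: (p ++ [y])) <:+ v ∨ (x :: (p ++ [y])).reverse <:+ v) :=
  stmt14_general w p x y hxy hpal hfac
end

section
/- Define g_1 = 1 and g_n = g_{n-1}·0·1^n·0·g_{n-1} over {0,1}, and let F(w) denote the set of flexed points of w. Then for n, k ≥ 2, the flexed points of 0^k·g_n that are not flexed points of 0^k·g_{n-1} are exactly 0^k·g_{n-1}·0·1 and 0^k·g_{n-1}·0·1^n. -/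
/-- The words `g 1 = 1`, `g n = g (n-1) ++ 0 ++ 1^n ++ 0 ++ g (n-1)` over `{0,1}`. -/
def g : ℕ → List (Fin 2)
  | 0 => []
  | 1 => [1]
  | (n+2) => g (n+1) ++ [0] ++ List.replicate (n+2) 1 ++ [0] ++ g (n+1)

/-!
Write `W = 0^k g_{n-1}`, so that `0^k g_n = W 0 1^n 0 g_{n-1}`. The points in question are the
prefixes `p x` of `0^k g_n` longer than `W` that are not standard extensions, and for most `p`
the longest proper palindromic suffix can be computed: it is `g_{n-1}` for `p = W`, `1^n` for
`p = W 0 1^n`, `1^i 0 g_{n-2} 0 1^i` for `p = W 0 1^i` with `0 < i < n - 1`, and `H^R 0 1^n 0 H`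
for `p = W 0 1^n 0 H`. The last two rest on the run `0 1^M 0` occurring only once in these words
(`g_{M-1}` has no factor `1^M`), so that a longer palindromic suffix would have to be centred on
it. In all these cases `x` is the letter preceding the palindrome, so `p x` is standard.

For `p = W 0` and `p = W 0 1^{n-1}` a lower bound suffices: the palindromic suffixes `0 g_{n-1} 0`
and `1^{n-1}` make lpps(p) so long that it is preceded by `0` in the first case, and in the second
a preceding `1` would give a palindromic suffix of `W 0 1^n` longer than `1^n`.
-/

namespace List

variable {α : Type*}

theorem IsInfix.of_append_cons_of_not_mem {u l₁ l₂ : List α} {c : α} (hc : c ∉ u)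
    (h : u <:+: l₁ ++ c :: l₂) : u <:+: l₁ ∨ u <:+: l₂ := by
  rcases infix_append_iff_ne_nil.1 h with h | h | ⟨u₁, u₂, -, hu₂, rfl, -, hpre⟩
  · exact .inl h
  · rcases infix_cons_iff.1 h with hpre | h
    · cases u with
      | nil => exact .inr nil_infix
      | cons y u => exact absurd (by simp_all) hc
    · exact .inr h
  · obtain ⟨y, u₂, rfl⟩ := exists_cons_of_ne_nil hu₂
    exact absurd (by simp_all) hc

theorem IsPrefix.of_append_cons_of_not_mem {u l₁ l₂ : List α} {c : α} (hc : c ∉ u)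
    (h : u <+: l₁ ++ c :: l₂) : u <+: l₁ := by
  rcases prefix_or_prefix_of_prefix h (by simp : l₁ ++ [c] <+: l₁ ++ c :: l₂) with h | h
  · rcases prefix_concat_iff.1 h with rfl | h
    · simp at hc
    · exact h
  · exact absurd (h.subset (by simp)) hc

theorem IsInfix.of_append_singleton_of_not_mem {u l : List α} {c : α} (hc : c ∉ u)
    (h : u <:+: l ++ [c]) : u <:+: l :=
  (h.of_append_cons_of_not_mem hc).elim id fun h => by
    rw [infix_nil.1 h]; exact nil_infix

theorem IsInfix.of_replicate_append_of_not_mem {u l : List α} {c : α} {j : ℕ} (hc : c ∉ u)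
    (h : u <:+: replicate j c ++ l) : u <:+: l := by
  cases j with
  | zero => simpa using h
  | succ j =>
    rw [replicate_succ', append_assoc, singleton_append] at h
    refine (h.of_append_cons_of_not_mem hc).elim (fun h' => ?_) id
    obtain ⟨-, hu⟩ := infix_replicate_iff.1 h'
    cases u with
    | nil => exact nil_infix
    | cons y u => exact absurd (by rw [hu]; simp) hc

theorem IsSuffix.exists_eq_append_of_length_le {s l₁ l₂ : List α} (h : s <:+ l₁ ++ l₂)
    (hl : l₂.length ≤ s.length) : ∃ f, f <:+ l₁ ∧ s = f ++ l₂ := by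
  obtain ⟨f, rfl⟩ := suffix_of_suffix_length_le (suffix_append l₁ l₂) h hl
  exact ⟨f, suffix_append_self_iff.1 h, rfl⟩

theorem IsSuffix.head?_eq_of_replicate_append {s l : List α} {c : α} {j : ℕ}
    (h : s <:+ replicate j c ++ l) (hl : l.length < s.length) : s.head? = some c := by
  obtain ⟨f, hf, rfl⟩ := h.exists_eq_append_of_length_le hl.le
  obtain ⟨-, hf⟩ := suffix_replicate_iff.1 hf
  obtain ⟨n, hn⟩ : ∃ n, f.length = n + 1 := ⟨f.length - 1, by simp at hl; omega⟩
  rw [hf, hn]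
  simp [replicate_succ]

-- `a b^M a` overlaps itself only in a single `a`, so an occurrence starting further left ends
-- inside `X ++ [a]`.
theorem framed_run_infix_of_append_eq {a b : α} (hab : a ≠ b) {M : ℕ} {X Y X' Y' : List α}
    (h : X ++ a :: (replicate M b ++ a :: Y) = X' ++ a :: (replicate M b ++ a :: Y'))
    (hlt : X'.length < X.length) : a :: replicate M b ++ [a] <:+: X ++ [a] := by
  rcases append_eq_append_iff.1 h with ⟨d, rfl, -⟩ | ⟨d, rfl, hd⟩
  · simp at hlt
  obtain ⟨y, d, rfl⟩ := exists_cons_of_ne_nil (show d ≠ [] by rintro rfl; simp at hlt)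
  suffices a :: replicate M b ++ [a] <+: y :: d ++ [a] by
    simpa using this.isInfix.trans (infix_append X' _ [])
  have hpre : y :: d ++ [a] <+: a :: (replicate M b ++ a :: Y') := by
    rw [hd]; simp
  rcases prefix_or_prefix_of_prefix (by simp : a :: replicate M b ++ [a] <+: _) hpre with h | h
  · exact h
  rcases prefix_concat_iff.1 h with h | h
  · exact h ▸ prefix_rfl
  · simp only [cons_append, cons_prefix_cons] at h
    exact absurd (mem_replicate.1 (h.2.subset (by simp))).2 hab

theorem concat_prefix_cons_replicate_cons {c d x : α} {n : ℕ} {s l : List α}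
    (h : s ++ [x] <+: c :: (replicate n d ++ c :: l)) :
    (s = [] ∧ x = c) ∨ (∃ i < n, s = c :: replicate i d ∧ x = d) ∨
        (s = c :: replicate n d ∧ x = c) ∨
      ∃ H, s = c :: (replicate n d ++ c :: H) ∧ H ++ [x] <+: l := by
  cases s with
  | nil => exact .inl ⟨rfl, by simpa using h⟩
  | cons y s =>
    simp only [cons_append, cons_prefix_cons] at h
    obtain ⟨rfl, h⟩ := h
    right
    rcases lt_trichotomy s.length n with hl | hl | hl
    · have hd := prefix_replicate_iff.1 ((isPrefix_append_of_length (by simp; omega)).1 h)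
      rw [length_append, length_singleton, replicate_succ'] at hd
      obtain ⟨hs, hx⟩ := append_inj' hd.2 rfl
      exact .inl ⟨s.length, hl, by rw [← hs], by simpa using hx⟩
    · obtain ⟨rfl, hx⟩ := (prefix_append_inj_of_length_eq (by simpa using hl)).1 h
      exact .inr (.inl ⟨rfl, by simpa using hx⟩)
    · obtain ⟨H, rfl⟩ := prefix_of_prefix_length_le
        (by simp : replicate n d ++ [y] <+: replicate n d ++ y :: l)
        ((prefix_append s [x]).trans h) (by simp; omega)
      exact .inr (.inr ⟨H, by simp, by simpa using h⟩)

end List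

open List

section LongestPalindromicSuffix

variable {α : Type*} {a b : α}

theorem IsLPPS.length_le {w p q : List α} (h : IsLPPS w p) (hq : q.reverse = q) (hs : q <:+ w)
    (hlt : q.length < w.length) : q.length ≤ p.length :=
  h.2.2.2 q hq hs (ne_of_apply_ne length hlt.ne)

theorem isLPPS_cons {w P : List α} (c : α) (hP : P.reverse = P) (hsuf : P <:+ w)
    (hmax : ∀ q : List α, q.reverse = q → q <:+ w → q.length ≤ P.length) :
    IsLPPS (c :: w) P := by
  refine ⟨hP, hsuf.trans (suffix_cons c w), fun h => ?_, fun q hq hs hne =>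
    hmax q hq ((suffix_cons_iff.1 hs).resolve_left hne)⟩
  have hlen := congrArg length h
  have := hsuf.length_le
  simp only [length_cons] at hlen
  omega

theorem isLPPS_replicate_append (hab : a ≠ b) {G : List α} (hG : G.reverse = G)
    (hhead : G.head? = some b) (k : ℕ) : IsLPPS (replicate (k + 1) a ++ G) G := by
  rw [replicate_succ, cons_append]
  refine isLPPS_cons a hG (suffix_append _ _) fun q hq hs => ?_
  by_contra! hlt
  have hqa := hs.head?_eq_of_replicate_append hlt
  obtain ⟨e, -, rfl⟩ := hs.exists_eq_append_of_length_le hlt.le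
  rw [← hq, reverse_append, hG, head?_append, hhead] at hqa
  exact hab (Option.some.inj hqa).symm

theorem length_le_of_reverse_eq_of_suffix_append_cons_replicate (hab : a ≠ b)
    {W q : List α} {n : ℕ} (hW : ¬ replicate n b <:+: W) (hq : q.reverse = q)
    (hs : q <:+ W ++ a :: replicate n b) : q.length ≤ n := by
  by_contra! hlt
  obtain ⟨f, hf, rfl⟩ := hs.exists_eq_append_of_length_le (by simpa using hlt)
  have hpre : replicate n b <+: f ++ a :: replicate n b := by
    rw [← hq]; simp
  exact hW ((hpre.of_append_cons_of_not_mem fun h => hab (eq_of_mem_replicate h)).isInfix.trans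
    hf.isInfix)

theorem isLPPS_mirror_framed_run (hab : a ≠ b) {G H : List α} {M : ℕ} (hG : G.reverse = G)
    (hrun : ¬ replicate M b <:+: G) (hH : H <+: G) (k : ℕ) :
    IsLPPS (replicate (k + 1) a ++ G ++ a :: (replicate M b ++ a :: H))
      (H.reverse ++ a :: (replicate M b ++ a :: H)) := by
  have hHG : H.reverse <:+ G := by rw [← hG]; exact reverse_suffix.2 hH
  rw [replicate_succ, cons_append, cons_append]
  refine isLPPS_cons a (by simp) ?_ fun q hq hs => ?_
  · obtain ⟨G₀, hG₀⟩ := hHG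
    exact ⟨replicate k a ++ G₀, by simp [← hG₀]⟩
  by_contra! hlt
  obtain ⟨e, he, rfl⟩ := hs.exists_eq_append_of_length_le (by simp at hlt ⊢; omega)
  have hframe := framed_run_infix_of_append_eq hab (X := e) (Y := H) (X' := H.reverse)
    (Y' := e.reverse) (by rw [← hq]; simp) (by simp at hlt ⊢; omega)
  have hb : replicate M b <:+: e ++ [a] := by
    simpa using (infix_append [a] (replicate M b) [a]).trans hframe
  have ha : a ∉ replicate M b := fun h => hab (eq_of_mem_replicate h)
  exact hrun (((hb.of_append_singleton_of_not_mem ha).trans he.isInfix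
    ).of_replicate_append_of_not_mem ha)

theorem isLPPS_append_cons_replicate (hab : a ≠ b) {W : List α} {n : ℕ}
    (hW : ¬ replicate n b <:+: W) : IsLPPS (W ++ a :: replicate n b) (replicate n b) :=
  ⟨by simp, suffix_append_of_suffix (suffix_cons _ _),
    fun h => by have := congrArg length h; simp at this; omega,
    fun _ hq hs _ => by
      simpa using length_le_of_reverse_eq_of_suffix_append_cons_replicate hab hW hq hs⟩

theorem isLPPS_mirror_short_run (hab : a ≠ b) {A : List α} {M i : ℕ} (hA : A.reverse = A)
    (hrun : ¬ replicate M b <:+: A) (hi : 0 < i) (hiM : i < M) (k : ℕ) :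
    IsLPPS (replicate (k + 1) a ++ A ++ a :: (replicate M b ++ a :: (A ++ a :: replicate i b)))
      (replicate i b ++ a :: (A ++ a :: replicate i b)) := by
  have ha : ∀ {n}, a ∉ replicate n b := fun h => hab (eq_of_mem_replicate h)
  rw [replicate_succ, cons_append, cons_append]
  refine isLPPS_cons a (by simp [hA]) ?_ fun q hq hs => ?_
  · obtain ⟨j, rfl⟩ : ∃ j, M = j + i := ⟨M - i, by omega⟩
    exact ⟨replicate k a ++ A ++ a :: replicate j b, by
      rw [replicate_add]; simp only [append_assoc, cons_append]⟩
  by_contra! hlt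
  have hs' : q <:+
      (replicate k a ++ A ++ a :: replicate M b) ++ a :: (A ++ a :: replicate i b) := by
    simpa using hs
  obtain ⟨e, he, rfl⟩ := hs'.exists_eq_append_of_length_le (by simp at hlt ⊢; omega)
  have hmirror :
      replicate i b ++ a :: (A ++ a :: e.reverse) = e ++ a :: (A ++ a :: replicate i b) := by
    rw [← hq]; simp [hA]
  rcases le_or_gt e.length M with heM | heM
  · have heb : e <:+ replicate M b :=
      suffix_of_suffix_length_le he ⟨replicate k a ++ A ++ [a], by simp⟩ (by simpa using heM)
    rw [(suffix_replicate_iff.1 heb).2] at hmirror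
    have hpre : replicate e.length b <+:
        replicate i b ++ a :: (A ++ a :: (replicate e.length b).reverse) := by
      rw [hmirror]; exact prefix_append _ _
    have := (hpre.of_append_cons_of_not_mem ha).length_le
    simp at this hlt
    omega
  have he' : e <:+ (replicate k a ++ A) ++ a :: replicate M b := by simpa using he
  obtain ⟨f, hf, rfl⟩ := he'.exists_eq_append_of_length_le (by simpa using heM)
  rcases lt_or_ge A.length f.length with hfA | hfA
  · have hhead := congrArg head? hmirror
    obtain ⟨j, rfl⟩ : ∃ j, i = j + 1 := ⟨i - 1, by omega⟩
    simp [head?_append, hf.head?_eq_of_replicate_append hfA, replicate_succ] at hhead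
    exact hab hhead.symm
  have hframe := framed_run_infix_of_append_eq hab (M := M) (X := replicate i b ++ a :: A)
    (Y := f.reverse) (X' := f) (Y' := A ++ a :: replicate i b)
    (by simpa using hmirror) (by simp; omega)
  have hb : replicate M b <:+: replicate i b ++ a :: (A ++ [a]) := by
    simpa using (infix_append [a] (replicate M b) [a]).trans hframe
  rcases hb.of_append_cons_of_not_mem ha with hb | hb
  · have := hb.length_le
    simp at this
    omega
  · exact hrun (hb.of_append_singleton_of_not_mem ha)

end LongestPalindromicSuffix

section FlexedPoints

variable {α : Type*}

theorem isRSE_append_singleton_iff {p : List α} {x : α} :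
    IsRSE p (p ++ [x]) ↔ ∃ q, IsLPPS p q ∧ x :: q <:+ p := by
  constructor
  · rintro ⟨y, q, hq, hs, hv⟩
    obtain rfl : x = y := by simpa using hv
    exact ⟨q, hq, hs⟩
  · rintro ⟨q, hq, hs⟩
    exact ⟨x, q, hq, hs, rfl⟩

theorem flexedPoint_append_singleton_iff {w p : List α} {x : α} :
    FlexedPoint w (p ++ [x]) ↔ p ++ [x] <+: w ∧ ¬ IsRSE p (p ++ [x]) := by
  constructor
  · rintro ⟨hw, p', x', hv, hn⟩
    obtain ⟨rfl, -⟩ := append_inj' hv rfl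
    exact ⟨hw, hn⟩
  · rintro ⟨hw, hn⟩
    exact ⟨hw, p, x, rfl, hn⟩

theorem flexedPoint_append_and_not_flexedPoint_iff {W T v : List α} :
    FlexedPoint (W ++ T) v ∧ ¬ FlexedPoint W v ↔
      ∃ s x, s ++ [x] <+: T ∧ v = W ++ s ++ [x] ∧ ¬ IsRSE (W ++ s) (W ++ s ++ [x]) := by
  constructor
  · rintro ⟨⟨hv, hflex⟩, hW⟩
    rcases prefix_or_prefix_of_prefix hv (prefix_append W T) with h | ⟨t, rfl⟩
    · exact absurd ⟨h, hflex⟩ hW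
    rcases eq_nil_or_concat' t with rfl | ⟨s, x, rfl⟩
    · exact absurd ⟨by simp, hflex⟩ hW
    refine ⟨s, x, by simpa using hv, by simp, ?_⟩
    refine (flexedPoint_append_singleton_iff (w := W ++ T)).1 ?_ |>.2
    rw [append_assoc]
    exact ⟨hv, hflex⟩
  · rintro ⟨s, x, hpre, rfl, hn⟩
    refine ⟨flexedPoint_append_singleton_iff.2 ⟨by simpa using hpre, hn⟩, fun h => ?_⟩
    simpa using h.1.length_le

end FlexedPoints

theorem g_succ {m : ℕ} (hm : 1 ≤ m) :
    g (m + 1) = g m ++ 0 :: (replicate (m + 1) 1 ++ 0 :: g m) := by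
  obtain ⟨m, rfl⟩ : ∃ j, m = j + 1 := ⟨m - 1, by omega⟩
  simp [g]

theorem g_reverse (m : ℕ) : (g m).reverse = g m := by
  induction m with
  | zero => rfl
  | succ m ih =>
    rcases Nat.eq_zero_or_pos m with rfl | hm
    · rfl
    · simp [g_succ hm, ih]

theorem g_head? {m : ℕ} (hm : 1 ≤ m) : (g m).head? = some 1 := by
  induction m, hm using Nat.le_induction with
  | base => rfl
  | succ m hm ih => simp [g_succ hm, ih]

theorem not_replicate_succ_infix_g (m : ℕ) : ¬ replicate (m + 1) 1 <:+: g m := by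
  induction m with
  | zero => simp [g]
  | succ m ih =>
    rcases Nat.eq_zero_or_pos m with rfl | hm
    · intro h; simpa [g] using h.length_le
    have h0 : ∀ {n}, (0 : Fin 2) ∉ replicate n 1 := by simp
    have hmono : replicate (m + 1) (1 : Fin 2) <:+: replicate (m + 2) 1 :=
      infix_replicate_iff.2 ⟨by simp, by simp⟩
    rw [g_succ hm]
    intro h
    rcases h.of_append_cons_of_not_mem h0 with h | h
    · exact ih (hmono.trans h)
    rcases h.of_append_cons_of_not_mem h0 with h | h
    · simpa using h.length_le
    · exact ih (hmono.trans h)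

theorem not_replicate_succ_infix_replicate_append_g (j m : ℕ) :
    ¬ replicate (m + 1) 1 <:+: replicate j 0 ++ g m := fun h =>
  not_replicate_succ_infix_g m (h.of_replicate_append_of_not_mem (by simp))

section StandardExtensions

variable {k m : ℕ}

theorem isRSE_g_append_zero (hm : 1 ≤ m) :
    IsRSE (replicate (k + 1) 0 ++ g m) (replicate (k + 1) 0 ++ g m ++ [0]) :=
  isRSE_append_singleton_iff.2
    ⟨g m, isLPPS_replicate_append zero_ne_one (g_reverse m) (g_head? hm) k,
      replicate k 0, by simp [replicate_succ']⟩

theorem isRSE_g_append_short_run {i : ℕ} (hi : 0 < i) (him : i < m) :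
    IsRSE (replicate (k + 1) 0 ++ g m ++ 0 :: replicate i 1)
      (replicate (k + 1) 0 ++ g m ++ 0 :: replicate i 1 ++ [1]) := by
  obtain ⟨j, rfl⟩ : ∃ j, m = j + i + 1 := ⟨m - i - 1, by omega⟩
  have hj : 1 ≤ j + i := by omega
  have hP := isLPPS_mirror_short_run zero_ne_one (g_reverse (j + i))
    (not_replicate_succ_infix_g (j + i)) hi (by omega) k
  refine isRSE_append_singleton_iff.2 ⟨_, by simpa [g_succ hj] using hP, ?_⟩
  refine ⟨replicate (k + 1) 0 ++ g (j + i) ++ 0 :: replicate j 1, ?_⟩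
  rw [g_succ hj, show j + i + 1 = j + (i + 1) by omega, replicate_add j (i + 1),
    replicate_succ (n := i)]
  simp only [append_assoc, cons_append]

theorem isRSE_g_append_run_append_zero :
    IsRSE (replicate (k + 1) 0 ++ g m ++ 0 :: replicate (m + 1) 1)
      (replicate (k + 1) 0 ++ g m ++ 0 :: replicate (m + 1) 1 ++ [0]) :=
  isRSE_append_singleton_iff.2 ⟨_, isLPPS_append_cons_replicate zero_ne_one
    (not_replicate_succ_infix_replicate_append_g _ m), suffix_append _ _⟩

theorem isRSE_g_append_run_append_prefix {H : List (Fin 2)} {x : Fin 2}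
    (hH : H ++ [x] <+: g m) :
    IsRSE (replicate (k + 1) 0 ++ g m ++ 0 :: (replicate (m + 1) 1 ++ 0 :: H))
      (replicate (k + 1) 0 ++ g m ++ 0 :: (replicate (m + 1) 1 ++ 0 :: H) ++ [x]) := by
  refine isRSE_append_singleton_iff.2 ⟨_, isLPPS_mirror_framed_run zero_ne_one (g_reverse m)
    (not_replicate_succ_infix_g m) ((prefix_append H [x]).trans hH) k, ?_⟩
  obtain ⟨G₀, hG₀⟩ : (H ++ [x]).reverse <:+ g m := by
    rw [← g_reverse m]; exact reverse_suffix.2 hH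
  exact ⟨replicate (k + 1) 0 ++ G₀, by rw [← hG₀]; simp⟩

theorem not_isRSE_g_append_zero_one :
    ¬ IsRSE (replicate (k + 2) 0 ++ g m ++ [0]) (replicate (k + 2) 0 ++ g m ++ [0] ++ [1]) := by
  rw [isRSE_append_singleton_iff]
  rintro ⟨q, hq, hs⟩
  have hlen := hq.length_le (q := 0 :: (g m ++ [0])) (by simp [g_reverse])
    ⟨replicate (k + 1) 0, by simp [replicate_succ']⟩ (by simp; omega)
  have hs' : 1 :: q <:+ replicate (k + 2) 0 ++ (g m ++ [0]) := by simpa using hs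
  have := hs'.head?_eq_of_replicate_append (by simp at hlen ⊢; omega)
  simp at this

theorem not_isRSE_g_append_run :
    ¬ IsRSE (replicate (k + 1) 0 ++ g m ++ 0 :: replicate m 1)
      (replicate (k + 1) 0 ++ g m ++ 0 :: replicate m 1 ++ [1]) := by
  rw [isRSE_append_singleton_iff]
  rintro ⟨q, hq, hs⟩
  have hlen := hq.length_le (q := replicate m 1) (by simp)
    (suffix_append_of_suffix (suffix_cons _ _)) (by simp; omega)
  have hsuf : 1 :: q ++ [1] <:+ (replicate (k + 1) 0 ++ g m) ++ 0 :: replicate (m + 1) 1 := by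
    simpa [replicate_succ'] using (suffix_append_self_iff (l₃ := [1])).2 hs
  have := length_le_of_reverse_eq_of_suffix_append_cons_replicate zero_ne_one
    (not_replicate_succ_infix_replicate_append_g _ m) (by simp [hq.1]) hsuf
  simp at hlen this
  omega

end StandardExtensions

theorem isRSE_or_flexed_of_concat_prefix {k m : ℕ} (hm : 1 ≤ m) {s : List (Fin 2)}
    {x : Fin 2} (h : s ++ [x] <+: 0 :: (replicate (m + 1) 1 ++ 0 :: g m)) :
    IsRSE (replicate (k + 1) 0 ++ g m ++ s) (replicate (k + 1) 0 ++ g m ++ s ++ [x]) ∨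
      s ++ [x] = [0, 1] ∨ s ++ [x] = 0 :: replicate (m + 1) 1 := by
  rcases concat_prefix_cons_replicate_cons h with
    ⟨rfl, rfl⟩ | ⟨i, hi, rfl, rfl⟩ | ⟨rfl, rfl⟩ | ⟨H, rfl, hH⟩
  · exact .inl (by simpa using isRSE_g_append_zero (k := k) hm)
  · rcases Nat.eq_zero_or_pos i with rfl | hi0
    · simp
    rcases (Nat.lt_succ_iff.1 hi).lt_or_eq with him | rfl
    · exact .inl (isRSE_g_append_short_run hi0 him)
    · simp [replicate_succ']
  · exact .inl isRSE_g_append_run_append_zero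
  · exact .inl (isRSE_g_append_run_append_prefix hH)

theorem stmt17 (n k : ℕ) (hn : 2 ≤ n) (hk : 2 ≤ k) :
    ∀ v : List (Fin 2),
      (FlexedPoint (List.replicate k (0 : Fin 2) ++ g n) v ∧
        ¬ FlexedPoint (List.replicate k (0 : Fin 2) ++ g (n - 1)) v) ↔
      (v = List.replicate k (0 : Fin 2) ++ g (n - 1) ++ [0, 1] ∨
       v = List.replicate k (0 : Fin 2) ++ g (n - 1) ++ [0] ++
         List.replicate n (1 : Fin 2)) := by
  obtain ⟨m, rfl⟩ : ∃ m, n = m + 1 := ⟨n - 1, by omega⟩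
  obtain ⟨k, rfl⟩ : ∃ j, k = j + 2 := ⟨k - 2, by omega⟩
  have hm : 1 ≤ m := by omega
  intro v
  rw [Nat.add_sub_cancel, g_succ hm, ← append_assoc, flexedPoint_append_and_not_flexedPoint_iff]
  constructor
  · rintro ⟨s, x, hpre, rfl, hflex⟩
    rcases isRSE_or_flexed_of_concat_prefix (k := k + 1) hm hpre with h | h | h
    · exact absurd h hflex
    · exact .inl (by rw [append_assoc, h])
    · exact .inr (by rw [append_assoc, h]; simp)
  · rintro (rfl | rfl)
    · exact ⟨[0], 1, by simp [replicate_succ], by simp, not_isRSE_g_append_zero_one⟩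
    · refine ⟨0 :: replicate m 1, 1, by simp [replicate_succ'], by simp [replicate_succ'], ?_⟩
      simpa using not_isRSE_g_append_run (k := k + 1)
end
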